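/- For each integer m ≥ 0, set c_m = x_3 (x_1 x_3)^m x_2 (x_3 x_1)^m x_3 ∈ W_3 and A_m = ⟨x_1, c_m⟩. Then each A_m is a free factor of W_3 isomorphic to the infinite dihedral group W_2, and for m ≠ m′ the subgroups A_m and A_{m′} are not conjugate in W_3. In particular, W_3 has infinitely many distinct conjugacy classes of free W_2-factors. -/

import Mathlib

/-- Relations of the free Coxeter group: each generator squares to the identity. -/
def coxeterRels (n : ℕ) : Set (FreeGroup (Fin n)) := Set.range fun i => (FreeGroup.of i) ^ 2

/-- The free Coxeter group of rank `n`, i.e. the free product of `n` copies of `ℤ/2ℤ`. -/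
abbrev W (n : ℕ) : Type := PresentedGroup (coxeterRels n)

/-- The standard order-2 generators `x_1, …, x_n` of `W n` (here indexed by `Fin n`). -/
def x (n : ℕ) (i : Fin n) : W n := PresentedGroup.of i

/-- The subgroup of inner automorphisms of a group. -/
def Inn (G : Type*) [Group G] : Subgroup (MulAut G) := (MulAut.conj : G →* MulAut G).range

instance Inn.normal (G : Type*) [Group G] : (Inn G).Normal := by
  constructor
  rintro - ⟨g, rfl⟩ φ
  refine ⟨φ g, ?_⟩
  ext y
  simp [MulAut.conj]

/-- The outer automorphism group `Aut(G)/Inn(G)`. -/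
abbrev Out (G : Type*) [Group G] : Type _ := MulAut G ⧸ Inn G
/-- A family of subgroups is a free product decomposition of `G` if the canonical
homomorphism from their abstract free product to `G` is an isomorphism. -/
def IsFreeProductOf {G : Type*} [Group G] {ι : Type*} (H : ι → Subgroup G) : Prop :=
  Function.Bijective (Monoid.CoprodI.lift fun i => (H i).subtype)

/-- A subgroup is a free factor if it admits a free complement. -/
def IsFreeFactor {G : Type*} [Group G] (A : Subgroup G) : Prop :=
  ∃ B : Subgroup G, IsFreeProductOf (fun b : Bool => bif b then A else B)

/-- The conjugacy class of a subgroup. -/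
def conjClass {G : Type*} [Group G] (A : Subgroup G) : Set (Subgroup G) :=
  {B | ∃ g : G, B = Subgroup.map (MulAut.conj g).toMonoidHom A}

/-- A partial `W₂`-basis of `W n`: a nonempty finite set of conjugacy classes of subgroups
isomorphic to `W 2` admitting representatives `A_1, …, A_k` such that
`W n = A_1 * ⋯ * A_k * B` for some subgroup `B`. -/
def IsPartialW2Basis (n : ℕ) (S : Set (Set (Subgroup (W n)))) : Prop :=
  ∃ (k : ℕ) (A : Fin k → Subgroup (W n)) (B : Subgroup (W n)),
    0 < k ∧
    (∀ i, Nonempty (↥(A i) ≃* W 2)) ∧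
    IsFreeProductOf (fun o : Option (Fin k) => o.elim B A) ∧
    Function.Injective (fun i => conjClass (A i)) ∧
    S = Set.range fun i => conjClass (A i)

/-- A subgroup of `W n` is `X*`-paired if it is generated by conjugates of `x_{2i-1}` and
`x_{2i}` for some `i ≤ ⌊n/2⌋` (with `0`-based indexing: `x_{2i}` and `x_{2i+1}`). -/
def IsXPaired (n : ℕ) (A : Subgroup (W n)) : Prop :=
  ∃ (i : ℕ) (hi : 2 * i + 1 < n) (g h : W n),
    A = Subgroup.closure
      {g * x n ⟨2 * i, by omega⟩ * g⁻¹, h * x n ⟨2 * i + 1, hi⟩ * h⁻¹}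

/-- The poset `BP_n` of partial `W₂`-bases of `W n`, ordered by inclusion. -/
def BP (n : ℕ) : Type := {S : Set (Set (Subgroup (W n))) // IsPartialW2Basis n S}

instance (n : ℕ) : PartialOrder (BP n) :=
  inferInstanceAs (PartialOrder {S : Set (Set (Subgroup (W n))) // IsPartialW2Basis n S})

/-- The poset `BP_n^*` of partial `W₂`-bases all of whose elements are conjugacy classes
of `X*`-paired free `W₂`-factors, ordered by inclusion. -/
def BPstar (n : ℕ) : Type :=
  {S : Set (Set (Subgroup (W n))) //
    IsPartialW2Basis n S ∧ ∀ C ∈ S, ∃ A : Subgroup (W n), IsXPaired n A ∧ C = conjClass A}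

instance (n : ℕ) : PartialOrder (BPstar n) :=
  inferInstanceAs (PartialOrder {S : Set (Set (Subgroup (W n))) //
    IsPartialW2Basis n S ∧ ∀ C ∈ S, ∃ A : Subgroup (W n), IsXPaired n A ∧ C = conjClass A})

open CategoryTheory in
/-- The geometric realization of the order complex (nerve) of a poset. -/
noncomputable def orderComplex (Q : Type) [Preorder Q] : TopCat :=
  SSet.toTop.obj (nerve Q)

/-- The element `c_m = x₃ (x₁x₃)^m x₂ (x₃x₁)^m x₃` of `W 3`. -/
def cElt (m : ℕ) : W 3 :=
  x 3 2 * (x 3 0 * x 3 2) ^ m * x 3 1 * (x 3 2 * x 3 0) ^ m * x 3 2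

/-- The subgroup `A_m = ⟨x₁, c_m⟩` of `W 3`. -/
def Asub (m : ℕ) : Subgroup (W 3) := Subgroup.closure {x 3 0, cElt m}

/-!
The subgroup `A_m` is generated by the two involutions `x₁` and `c_m`. Since `c_m` is the
conjugate of `x₂` by `x₃(x₁x₃)^m`, any three involutions `a, c, b` of a group are the images
of `x₁, c_m, x₃` under a homomorphism out of `W₃`. Sending `x₁, c_m, x₃` to the generators
`y₁, y₂` of `W₂` and to `1` retracts `A_m` onto `W₂`, and sending them to their copies in the
abstract free product `A_m * ⟨x₃⟩` inverts the canonical map from it, so `A_m` is a free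
`W₂`-factor.

To separate the conjugacy classes, represent `W₃` in `GL₂(ℤ)` by reflections. An element of
`A_m` of determinant one is a power `(x₁c_m)^k`; its trace is `2` if `k = 0`, and otherwise at
least `tr ρ(x₁c_m) = 8m + 6`, because the traces of the powers of a determinant-one `2 × 2`
matrix of trace at least `2` increase. So `8m + 6` is the least trace above `2` of a
determinant-one element of `A_m`, a conjugacy invariant.
-/

lemma x_mul_self (n : ℕ) (i : Fin n) : x n i * x n i = 1 := by
  have h : PresentedGroup.mk (coxeterRels n) (FreeGroup.of i ^ 2) = 1 :=
    (QuotientGroup.eq_one_iff _).mpr (Subgroup.subset_normalClosure ⟨i, rfl⟩)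
  simpa [x, PresentedGroup.of, sq] using h

lemma x_inv (n : ℕ) (i : Fin n) : (x n i)⁻¹ = x n i :=
  inv_eq_of_mul_eq_one_right (x_mul_self n i)

namespace W

variable {n : ℕ} {G : Type*} [Group G]

def lift (f : Fin n → G) (hf : ∀ i, f i * f i = 1) : W n →* G :=
  PresentedGroup.toGroup (f := f) <| by
    rintro - ⟨i, rfl⟩
    rw [map_pow, FreeGroup.lift_apply_of, sq, hf]

@[simp]
lemma lift_x (f : Fin n → G) (hf : ∀ i, f i * f i = 1) (i : Fin n) : lift f hf (x n i) = f i :=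
  PresentedGroup.toGroup.of _

lemma hom_ext {φ ψ : W n →* G} (h : ∀ i, φ (x n i) = ψ (x n i)) : φ = ψ :=
  PresentedGroup.ext h

lemma closure_range_x : Subgroup.closure (Set.range (x n)) = ⊤ :=
  PresentedGroup.closure_range_of _

end W

section Involutions

variable {G : Type*} [Group G]

lemma conj_mul_self_conj {a : G} (ha : a * a = 1) (g : G) :
    g * a * g⁻¹ * (g * a * g⁻¹) = 1 := by
  simp [mul_assoc, ← mul_assoc a a, ha]

lemma map_mul_self_eq_one {H : Type*} [Group H] (f : G →* H) {a : G} (ha : a * a = 1) :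
    f a * f a = 1 := by
  rw [← map_mul, ha, map_one]

lemma conj_mul_eq_inv_of_mul_self {a b : G} (ha : a * a = 1) (hb : b * b = 1) :
    a * (a * b) * a⁻¹ = (a * b)⁻¹ := by
  rw [inv_eq_of_mul_eq_one_right ha, mul_inv_rev, inv_eq_of_mul_eq_one_right ha,
    inv_eq_of_mul_eq_one_right hb, ← mul_assoc, ha, one_mul]

lemma mem_closure_pair_of_mul_self {a b : G} (ha : a * a = 1) (hb : b * b = 1) {w : G}
    (hw : w ∈ Subgroup.closure {a, b}) :
    (∃ k : ℤ, w = (a * b) ^ k) ∨ ∃ k : ℤ, w = (a * b) ^ k * a := by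
  have hia : a⁻¹ = a := inv_eq_of_mul_eq_one_right ha
  have hib : b⁻¹ = b := inv_eq_of_mul_eq_one_right hb
  have hconj (k : ℤ) : a * (a * b) ^ k = (a * b) ^ (-k) * a := by
    rw [zpow_neg, ← inv_zpow, ← conj_mul_eq_inv_of_mul_self ha hb, conj_zpow,
      inv_mul_cancel_right]
  induction hw using Subgroup.closure_induction with
  | mem w hw =>
    rcases hw with rfl | rfl
    · exact Or.inr ⟨0, by simp⟩
    · exact Or.inr ⟨-1, by rw [zpow_neg_one, mul_inv_rev, hia, hib, mul_assoc, ha, mul_one]⟩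
  | one => exact Or.inl ⟨0, by simp⟩
  | mul u v _ _ ihu ihv =>
    rcases ihu with ⟨j, rfl⟩ | ⟨j, rfl⟩ <;> rcases ihv with ⟨k, rfl⟩ | ⟨k, rfl⟩
    · exact Or.inl ⟨j + k, by rw [zpow_add]⟩
    · exact Or.inr ⟨j + k, by rw [zpow_add, mul_assoc]⟩
    · exact Or.inr ⟨j - k, by rw [mul_assoc, hconj, ← mul_assoc, ← zpow_add, sub_eq_add_neg]⟩
    · refine Or.inl ⟨j - k, ?_⟩
      rw [mul_assoc, ← mul_assoc a, hconj, mul_assoc, ha, mul_one, ← zpow_add, sub_eq_add_neg]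
  | inv u _ ihu =>
    rcases ihu with ⟨k, rfl⟩ | ⟨k, rfl⟩
    · exact Or.inl ⟨-k, by rw [zpow_neg]⟩
    · exact Or.inr ⟨k, by rw [mul_inv_rev, hia, ← zpow_neg, hconj, neg_neg]⟩

lemma isConj_mul_zpow_natAbs_of_mul_self {a b : G} (ha : a * a = 1) (hb : b * b = 1) (k : ℤ) :
    IsConj ((a * b) ^ k) ((a * b) ^ k.natAbs) := by
  obtain ⟨n, rfl | rfl⟩ := Int.eq_nat_or_neg k
  · rw [zpow_natCast, Int.natAbs_natCast]
  · rw [Int.natAbs_neg, Int.natAbs_natCast, zpow_neg, zpow_natCast]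
    refine (isConj_iff.mpr ⟨a, ?_⟩).symm
    rw [← conj_pow, conj_mul_eq_inv_of_mul_self ha hb, inv_pow]

end Involutions

theorem nonempty_closure_pair_mulEquiv_W2 {G : Type*} [Group G] {a b : G}
    (ha : a * a = 1) (hb : b * b = 1) (r : G →* W 2) (hra : r a = x 2 0) (hrb : r b = x 2 1) :
    Nonempty (Subgroup.closure {a, b} ≃* W 2) := by
  let ι : W 2 →* G := W.lift ![a, b] (fun i => by fin_cases i <;> assumption)
  have hrι : r.comp ι = MonoidHom.id _ := W.hom_ext fun i => by
    fin_cases i <;> simp [ι, hra, hrb]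
  have hι : Function.Injective ι := Function.LeftInverse.injective (DFunLike.congr_fun hrι)
  have hrange : ι.range = Subgroup.closure {a, b} := by
    rw [MonoidHom.range_eq_map, ← W.closure_range_x, MonoidHom.map_closure, ← Set.range_comp]
    congr 1
    ext w
    simp [ι, Fin.exists_fin_two, eq_comm]
  exact ⟨(MulEquiv.subgroupCongr hrange).symm.trans (MonoidHom.ofInjective hι).symm⟩

theorem isFreeProductOf_of_leftInverse {G : Type*} [Group G] {ι : Type*} {H : ι → Subgroup G}
    (ψ : G →* Monoid.CoprodI fun i => H i)
    (hψ : ∀ i, ψ.comp (H i).subtype = Monoid.CoprodI.of (M := fun i => H i))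
    (hgen : ⨆ i, H i = ⊤) : IsFreeProductOf H := by
  set L : (Monoid.CoprodI fun i => H i) →* G := Monoid.CoprodI.lift fun i => (H i).subtype
  have hψL : ψ.comp L = MonoidHom.id _ := Monoid.CoprodI.ext_hom _ _ fun i => by
    ext h
    simpa [L] using DFunLike.congr_fun (hψ i) h
  have hLψ : L.comp ψ = MonoidHom.id G := by
    ext w
    have hle : ⨆ i, H i ≤ MonoidHom.eqLocus (L.comp ψ) (MonoidHom.id G) :=
      iSup_le fun i h hh => show L (ψ h) = h by
        simpa [L] using congrArg L (DFunLike.congr_fun (hψ i) ⟨h, hh⟩)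
    exact hle (hgen ▸ Subgroup.mem_top w)
  exact ⟨Function.LeftInverse.injective (DFunLike.congr_fun hψL),
    Function.RightInverse.surjective (DFunLike.congr_fun hLψ)⟩

lemma mem_conjClass_self {G : Type*} [Group G] (A : Subgroup G) : A ∈ conjClass A :=
  ⟨1, by rw [map_one]; exact (Subgroup.map_id A).symm⟩

section TwoByTwo

variable {R : Type*} [CommRing R] {N : Matrix (Fin 2) (Fin 2) R}

lemma mul_self_eq_trace_smul_sub_one_of_det_eq_one (hdet : N.det = 1) :
    N * N = N.trace • N - 1 := by
  rw [Matrix.det_fin_two] at hdet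
  ext i j
  fin_cases i <;> fin_cases j <;>
    simp [Matrix.mul_apply, Matrix.trace_fin_two] <;> first | ring1 | linear_combination -hdet

lemma trace_pow_add_two_of_det_eq_one (hdet : N.det = 1) (k : ℕ) :
    (N ^ (k + 2)).trace = N.trace * (N ^ (k + 1)).trace - (N ^ k).trace := by
  rw [pow_add, sq, mul_self_eq_trace_smul_sub_one_of_det_eq_one hdet, mul_sub, mul_one,
    Matrix.mul_smul, Matrix.trace_sub, Matrix.trace_smul, ← pow_succ, smul_eq_mul]

lemma monotone_trace_pow_of_det_eq_one [LinearOrder R] [IsStrictOrderedRing R]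
    (hdet : N.det = 1) (htr : 2 ≤ N.trace) : Monotone fun k : ℕ => (N ^ k).trace := by
  have key (k : ℕ) : 2 ≤ (N ^ k).trace ∧ (N ^ k).trace ≤ (N ^ (k + 1)).trace := by
    induction k with
    | zero => simpa [Matrix.trace_one] using htr
    | succ k ih =>
      refine ⟨ih.1.trans ih.2, ?_⟩
      rw [trace_pow_add_two_of_det_eq_one hdet]
      nlinarith [ih.1, ih.2]
  exact monotone_nat_of_le_succ fun k => (key k).2

end TwoByTwo

section TraceInvariant

variable {G : Type*} [Group G] {n R : Type*} [Fintype n] [DecidableEq n] [CommRing R]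
  (ρ : G →* GL n R)

lemma trace_eq_of_isConj {g h : G} (hgh : IsConj g h) :
    (ρ g : Matrix n n R).trace = (ρ h : Matrix n n R).trace := by
  obtain ⟨c, rfl⟩ := isConj_iff.mp hgh
  rw [map_mul, map_mul, map_inv, Units.val_mul, Units.val_mul, Matrix.trace_units_conj]

def detOneTraces (A : Subgroup G) : Set R :=
  {t | ∃ g ∈ A, Matrix.GeneralLinearGroup.det (ρ g) = 1 ∧ (ρ g : Matrix n n R).trace = t}

lemma detOneTraces_map_conj (A : Subgroup G) (c : G) :
    detOneTraces ρ (A.map (MulAut.conj c).toMonoidHom) = detOneTraces ρ A := by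
  have hconj (g : G) : IsConj g (c * g * c⁻¹) := isConj_iff.mpr ⟨c, rfl⟩
  have hdet (g : G) : Matrix.GeneralLinearGroup.det (ρ (c * g * c⁻¹)) =
      Matrix.GeneralLinearGroup.det (ρ g) := by
    simp only [map_mul, map_inv, mul_inv_cancel_comm]
  ext t
  constructor
  · rintro ⟨-, ⟨g, hg, rfl⟩, hg1, rfl⟩
    exact ⟨g, hg, (hdet g).symm.trans hg1, trace_eq_of_isConj ρ (hconj g)⟩
  · rintro ⟨g, hg, hg1, rfl⟩
    exact ⟨c * g * c⁻¹, ⟨g, hg, rfl⟩, (hdet g).trans hg1, (trace_eq_of_isConj ρ (hconj g)).symm⟩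

end TraceInvariant

def cConjugator (m : ℕ) : W 3 := x 3 2 * (x 3 0 * x 3 2) ^ m

lemma cElt_eq_conj (m : ℕ) : cElt m = cConjugator m * x 3 1 * (cConjugator m)⁻¹ := by
  simp [cElt, cConjugator, mul_assoc, x_inv, ← inv_pow]

lemma cConjugator_inv (m : ℕ) : (cConjugator m)⁻¹ = cConjugator m := by
  simp [cConjugator, x_inv, ← inv_pow, mul_pow_mul]

lemma cElt_mul_self (m : ℕ) : cElt m * cElt m = 1 := by
  rw [cElt_eq_conj]
  exact conj_mul_self_conj (x_mul_self 3 1) _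

lemma x_mem_Asub (m : ℕ) : x 3 0 ∈ Asub m := Subgroup.subset_closure (by simp)

lemma cElt_mem_Asub (m : ℕ) : cElt m ∈ Asub m := Subgroup.subset_closure (by simp)

section LiftOfCElt

variable (m : ℕ) {K : Type*} [Group K] {a c b : K} (ha : a * a = 1) (hc : c * c = 1)
  (hb : b * b = 1)

def liftOfCElt : W 3 →* K :=
  W.lift ![a, (b * (a * b) ^ m)⁻¹ * c * (b * (a * b) ^ m), b] fun i => by
    fin_cases i
    · exact ha
    · simpa using conj_mul_self_conj hc (b * (a * b) ^ m)⁻¹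
    · exact hb

@[simp]
lemma liftOfCElt_x_zero : liftOfCElt m ha hc hb (x 3 0) = a := W.lift_x _ _ 0

@[simp]
lemma liftOfCElt_x_two : liftOfCElt m ha hc hb (x 3 2) = b := W.lift_x _ _ 2

@[simp]
lemma liftOfCElt_cElt : liftOfCElt m ha hc hb (cElt m) = c := by
  have hconj : liftOfCElt m ha hc hb (cConjugator m) = b * (a * b) ^ m := by simp [cConjugator]
  rw [cElt_eq_conj, map_mul, map_mul, map_inv, hconj]
  simp [liftOfCElt, mul_assoc]

end LiftOfCElt

theorem nonempty_Asub_mulEquiv_W2 (m : ℕ) : Nonempty (Asub m ≃* W 2) :=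
  nonempty_closure_pair_mulEquiv_W2 (x_mul_self 3 0) (cElt_mul_self m)
    (liftOfCElt m (x_mul_self 2 0) (x_mul_self 2 1) (one_mul 1)) (by simp) (by simp)

def AsubFactors (m : ℕ) (b : Bool) : Subgroup (W 3) :=
  bif b then Asub m else Subgroup.closure {x 3 2}

lemma iSup_AsubFactors (m : ℕ) : ⨆ b, AsubFactors m b = ⊤ := by
  rw [iSup_bool_eq, eq_top_iff, ← W.closure_range_x, Subgroup.closure_le]
  have hx0 : x 3 0 ∈ Asub m ⊔ Subgroup.closure {x 3 2} := Subgroup.mem_sup_left (x_mem_Asub m)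
  have hc : cElt m ∈ Asub m ⊔ Subgroup.closure {x 3 2} :=
    Subgroup.mem_sup_left (cElt_mem_Asub m)
  have hx2 : x 3 2 ∈ Asub m ⊔ Subgroup.closure {x 3 2} :=
    Subgroup.mem_sup_right (Subgroup.subset_closure rfl)
  have hconj : cConjugator m ∈ Asub m ⊔ Subgroup.closure {x 3 2} :=
    mul_mem hx2 (pow_mem (mul_mem hx0 hx2) m)
  rintro - ⟨i, rfl⟩
  fin_cases i
  · exact hx0
  · have hx1 : x 3 1 = (cConjugator m)⁻¹ * cElt m * cConjugator m := by
      rw [cElt_eq_conj]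
      group
    show x 3 1 ∈ Asub m ⊔ Subgroup.closure {x 3 2}
    rw [hx1]
    exact mul_mem (mul_mem (inv_mem hconj) hc) hconj
  · exact hx2

def toAsubFactors (m : ℕ) : W 3 →* Monoid.CoprodI fun b => AsubFactors m b :=
  liftOfCElt m
    (a := Monoid.CoprodI.of (i := true) ⟨x 3 0, x_mem_Asub m⟩)
    (c := Monoid.CoprodI.of (i := true) ⟨cElt m, cElt_mem_Asub m⟩)
    (b := Monoid.CoprodI.of (i := false) ⟨x 3 2, Subgroup.subset_closure rfl⟩)
    (map_mul_self_eq_one _ (Subtype.ext (x_mul_self 3 0)))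
    (map_mul_self_eq_one _ (Subtype.ext (cElt_mul_self m)))
    (map_mul_self_eq_one _ (Subtype.ext (x_mul_self 3 2)))

lemma toAsubFactors_comp_subtype (m : ℕ) (b : Bool) :
    (toAsubFactors m).comp (AsubFactors m b).subtype =
      Monoid.CoprodI.of (M := fun b => AsubFactors m b) := by
  cases b
  · refine MonoidHom.eq_of_eqOn_dense (Subgroup.closure_closure_coe_preimage (k := {x 3 2})) ?_
    rintro ⟨w, hw⟩ rfl
    show toAsubFactors m (x 3 2) = Monoid.CoprodI.of (i := false) ⟨x 3 2, hw⟩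
    simp [toAsubFactors]
  · refine MonoidHom.eq_of_eqOn_dense
      (Subgroup.closure_closure_coe_preimage (k := {x 3 0, cElt m})) ?_
    rintro ⟨w, hw⟩ (rfl | rfl)
    · show toAsubFactors m (x 3 0) = Monoid.CoprodI.of (i := true) ⟨x 3 0, hw⟩
      simp [toAsubFactors]
    · show toAsubFactors m (cElt m) = Monoid.CoprodI.of (i := true) ⟨cElt m, hw⟩
      simp [toAsubFactors]

theorem Asub_isFreeFactor (m : ℕ) : IsFreeFactor (Asub m) :=
  ⟨_, isFreeProductOf_of_leftInverse _ (toAsubFactors_comp_subtype m) (iSup_AsubFactors m)⟩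

/-- The images of `x₁, x₂, x₃`: reflections chosen so that `ρ(x₁x₃)` is unipotent, which makes
the trace of `ρ(x₁ c_m)` grow linearly in `m`. -/
def reflections : Fin 3 → Matrix (Fin 2) (Fin 2) ℤ :=
  ![!![1, 0; 0, -1], !![-1, 0; 2, 1], !![1, 2; 0, -1]]

lemma reflections_mul_self (i : Fin 3) : reflections i * reflections i = 1 := by
  fin_cases i <;> decide

def rho : W 3 →* GL (Fin 2) ℤ :=
  W.lift (fun i => ⟨reflections i, reflections i, reflections_mul_self i,
    reflections_mul_self i⟩) fun i => Units.ext (reflections_mul_self i)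

@[simp]
lemma rho_x (i : Fin 3) : (rho (x 3 i) : Matrix (Fin 2) (Fin 2) ℤ) = reflections i := by
  simp [rho]

lemma det_rho_x (i : Fin 3) : Matrix.GeneralLinearGroup.det (rho (x 3 i)) = -1 := by
  ext
  fin_cases i <;> simp [reflections, Matrix.det_fin_two]

lemma rho_cConjugator (m : ℕ) :
    (rho (cConjugator m) : Matrix (Fin 2) (Fin 2) ℤ) = !![1, 2 * (m : ℤ) + 2; 0, -1] := by
  have hpow : ((rho (x 3 0 * x 3 2) ^ m : GL (Fin 2) ℤ) : Matrix (Fin 2) (Fin 2) ℤ) =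
      !![1, 2 * (m : ℤ); 0, 1] := by
    induction m with
    | zero => simp [Matrix.one_fin_two]
    | succ m ih =>
      rw [pow_succ, Units.val_mul, ih]
      simp [reflections]
      ring
  rw [cConjugator, map_mul, map_pow, Units.val_mul, hpow]
  simp [reflections]

lemma trace_rho_x_mul_cElt (m : ℕ) :
    (rho (x 3 0 * cElt m) : Matrix (Fin 2) (Fin 2) ℤ).trace = 8 * m + 6 := by
  rw [cElt_eq_conj, cConjugator_inv]
  simp only [map_mul, Units.val_mul, rho_cConjugator, rho_x]
  simp [reflections, Matrix.trace_fin_two]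
  ring

lemma det_rho_x_mul_cElt (m : ℕ) : Matrix.GeneralLinearGroup.det (rho (x 3 0 * cElt m)) = 1 := by
  simp [cElt_eq_conj, det_rho_x]

lemma mem_detOneTraces_rho_Asub (m : ℕ) : 8 * (m : ℤ) + 6 ∈ detOneTraces rho (Asub m) :=
  ⟨x 3 0 * cElt m, mul_mem (x_mem_Asub m) (cElt_mem_Asub m), det_rho_x_mul_cElt m,
    trace_rho_x_mul_cElt m⟩

lemma detOneTraces_rho_Asub_subset (m : ℕ) :
    detOneTraces rho (Asub m) ⊆ insert 2 (Set.Ici (8 * (m : ℤ) + 6)) := by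
  rintro - ⟨w, hw, hdet, rfl⟩
  rcases mem_closure_pair_of_mul_self (x_mul_self 3 0) (cElt_mul_self m) hw with
    ⟨k, rfl⟩ | ⟨k, rfl⟩
  · rw [trace_eq_of_isConj rho
      (isConj_mul_zpow_natAbs_of_mul_self (x_mul_self 3 0) (cElt_mul_self m) k),
      map_pow, Units.val_pow_eq_pow_val]
    rcases Nat.eq_zero_or_pos k.natAbs with hk | hk
    · left
      simp [hk]
    · right
      have hdet₁ : (rho (x 3 0 * cElt m) : Matrix (Fin 2) (Fin 2) ℤ).det = 1 := by
        rw [← Matrix.GeneralLinearGroup.val_det_apply, det_rho_x_mul_cElt, Units.val_one]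
      have htr : 2 ≤ (rho (x 3 0 * cElt m) : Matrix (Fin 2) (Fin 2) ℤ).trace := by
        rw [trace_rho_x_mul_cElt]
        omega
      rw [Set.mem_Ici, ← trace_rho_x_mul_cElt m]
      simpa using monotone_trace_pow_of_det_eq_one hdet₁ htr hk
  · rw [map_mul, map_mul, map_zpow, map_zpow, det_rho_x_mul_cElt, det_rho_x] at hdet
    simp at hdet

theorem conjClass_Asub_injective : Function.Injective fun m => conjClass (Asub m) := by
  intro m m' (h : conjClass (Asub m) = conjClass (Asub m'))
  obtain ⟨g, hg⟩ : Asub m ∈ conjClass (Asub m') := h ▸ mem_conjClass_self _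
  have htraces : detOneTraces rho (Asub m) = detOneTraces rho (Asub m') := by
    rw [hg, detOneTraces_map_conj]
  have h₁ := detOneTraces_rho_Asub_subset m' (htraces ▸ mem_detOneTraces_rho_Asub m)
  have h₂ := detOneTraces_rho_Asub_subset m (htraces ▸ mem_detOneTraces_rho_Asub m')
  simp only [Set.mem_insert_iff, Set.mem_Ici] at h₁ h₂
  omega

/-- Each `A_m` is a free factor of `W 3` isomorphic to the infinite dihedral group `W 2`,
distinct `A_m` are nonconjugate, and consequently `W 3` has infinitely many conjugacy
classes of free `W₂`-factors. -/
theorem infinitely_many_W2_factor_classes :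
    (∀ m : ℕ, IsFreeFactor (Asub m) ∧ Nonempty (↥(Asub m) ≃* W 2)) ∧
    (∀ m m' : ℕ, m ≠ m' → conjClass (Asub m) ≠ conjClass (Asub m')) ∧
    {S : Set (Subgroup (W 3)) |
      ∃ A : Subgroup (W 3), IsFreeFactor A ∧ Nonempty (↥A ≃* W 2) ∧ S = conjClass A}.Infinite
    := by
  refine ⟨fun m => ⟨Asub_isFreeFactor m, nonempty_Asub_mulEquiv_W2 m⟩,
    fun m m' => conjClass_Asub_injective.ne, ?_⟩
  exact Set.infinite_of_injective_forall_mem conjClass_Asub_injective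
    fun m => ⟨Asub m, Asub_isFreeFactor m, nonempty_Asub_mulEquiv_W2 m, rfl⟩
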